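/- arXiv:2109.04580 — 3 statements merged into one kernel-verified Lean document; each statement's English description precedes it below -/
import Mathlib

section
/- The subgroup zeta function of the free abelian group of rank h equals the product ζ(s)ζ(s-1)···ζ(s-h+1) of shifted Riemann zeta functions; equivalently, for every n ≥ 1 the number of subgroups of index n in ℤ^h equals the coefficient of n^{-s} in ζ(s)ζ(s-1)···ζ(s-h+1). -/
open Finset

/-- Dirichlet coefficient of `ζ(s)ζ(s-1)⋯ζ(s-h+1)`. -/
def cf (h n : ℕ) : ℕ :=
  ∑ d ∈ (Fintype.piFinset fun _ : Fin h => Finset.range (n + 1)).filter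
      (fun d => ∏ i, d i = n), ∏ i : Fin h, d i ^ (i : ℕ)

lemma cf_zero (n : ℕ) : cf 0 n = if n = 1 then 1 else 0 := by
  classical
  unfold cf
  rcases eq_or_ne n 1 with rfl | hn
  · simp
  · simp [Finset.filter_eq_empty_iff, hn, eq_comm]

lemma filter_prod_eq (h : ℕ) {n N : ℕ} (hn : n ≠ 0) (hN : n ≤ N) :
    (Fintype.piFinset fun _ : Fin h => Finset.range (N + 1)).filter (fun d => ∏ i, d i = n)
      = (Fintype.piFinset fun _ : Fin h => Finset.range (n + 1)).filter
          (fun d => ∏ i, d i = n) := by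
  ext d
  simp only [Finset.mem_filter, Fintype.mem_piFinset, Finset.mem_range]
  constructor
  · rintro ⟨hd, hp⟩
    refine ⟨fun i => ?_, hp⟩
    have : d i ∣ n := hp ▸ Finset.dvd_prod_of_mem d (Finset.mem_univ i)
    exact Nat.lt_succ_of_le (Nat.le_of_dvd (Nat.pos_of_ne_zero hn) this)
  · rintro ⟨hd, hp⟩
    exact ⟨fun i => lt_of_lt_of_le (hd i) (by omega), hp⟩

lemma cf_eq_of_le (h : ℕ) {n N : ℕ} (hn : n ≠ 0) (hN : n ≤ N) :
    cf h n = ∑ d ∈ (Fintype.piFinset fun _ : Fin h => Finset.range (N + 1)).filter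
        (fun d => ∏ i, d i = n), ∏ i : Fin h, d i ^ (i : ℕ) := by
  rw [cf, filter_prod_eq h hn hN]

lemma cf_succ (h : ℕ) {n : ℕ} (hn : n ≠ 0) :
    cf (h + 1) n = ∑ p ∈ n.divisorsAntidiagonal, p.2 * cf h p.2 := by
  classical
  have hrw : ∀ p ∈ n.divisorsAntidiagonal,
      p.2 * cf h p.2 = ∑ c ∈ (Fintype.piFinset fun _ : Fin h => Finset.range (n + 1)).filter
        (fun c => ∏ i, c i = p.2), p.2 * ∏ i : Fin h, c i ^ (i : ℕ) := by
    intro p hp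
    obtain ⟨hpe, hn0⟩ := Nat.mem_divisorsAntidiagonal.mp hp
    have hp2 : p.2 ≠ 0 := by rintro h0; rw [h0, mul_zero] at hpe; exact hn0 hpe.symm
    have hp2n : p.2 ≤ n := Nat.le_of_dvd (Nat.pos_of_ne_zero hn0) ⟨p.1, by rw [← hpe]; ring⟩
    rw [cf_eq_of_le h hp2 hp2n, Finset.mul_sum]
  rw [Finset.sum_congr rfl hrw, Finset.sum_sigma']
  unfold cf
  refine Finset.sum_bij' (fun d _ => ⟨(d 0, ∏ i : Fin h, d i.succ), Fin.tail d⟩)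
      (fun x _ => Fin.cons x.1.1 x.2) ?_ ?_ ?_ ?_ ?_
  · intro d hd
    simp only [Finset.mem_filter, Fintype.mem_piFinset, Finset.mem_range] at hd
    obtain ⟨hd1, hd2⟩ := hd
    rw [Fin.prod_univ_succ] at hd2
    simp only [Finset.mem_sigma, Finset.mem_filter, Fintype.mem_piFinset, Finset.mem_range,
      Nat.mem_divisorsAntidiagonal]
    exact ⟨⟨hd2, hn⟩, fun i => hd1 _, rfl⟩
  · intro x hx
    simp only [Finset.mem_sigma, Finset.mem_filter, Fintype.mem_piFinset, Finset.mem_range,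
      Nat.mem_divisorsAntidiagonal] at hx
    obtain ⟨⟨hprod, -⟩, hc, hcp⟩ := hx
    simp only [Finset.mem_filter, Fintype.mem_piFinset, Finset.mem_range]
    constructor
    · intro i
      refine Fin.cases ?_ ?_ i
      · simp only [Fin.cons_zero]
        have : x.1.1 ∣ n := ⟨x.1.2, hprod.symm⟩
        exact Nat.lt_succ_of_le (Nat.le_of_dvd (Nat.pos_of_ne_zero hn) this)
      · intro j; simpa using hc j
    · rw [Fin.prod_univ_succ]
      simp [hcp, hprod]
  · intro d hd
    exact Fin.cons_self_tail d
  · intro x hx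
    simp only [Finset.mem_sigma, Finset.mem_filter, Fintype.mem_piFinset, Finset.mem_range,
      Nat.mem_divisorsAntidiagonal] at hx
    obtain ⟨⟨hprod, -⟩, hc, hcp⟩ := hx
    have h2 : (∏ i : Fin h, (Fin.cons x.1.1 x.2 : Fin (h+1) → ℕ) i.succ) = x.1.2 := by
      simp only [Fin.cons_succ]; exact hcp
    refine Sigma.ext ?_ (heq_of_eq (show Fin.tail (Fin.cons x.1.1 x.2 : Fin (h+1) → ℕ) = x.2
      from funext fun i => Fin.cons_succ _ _ _))
    show ((Fin.cons x.1.1 x.2 : Fin (h+1) → ℕ) 0,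
      ∏ i : Fin h, (Fin.cons x.1.1 x.2 : Fin (h+1) → ℕ) i.succ) = x.1
    rw [Fin.cons_zero, h2]
  · intro d hd
    rw [Fin.prod_univ_succ]
    simp only [Fin.val_zero, pow_zero, one_mul]
    have : ∀ i : Fin h, d i.succ ^ (i.succ : ℕ) = d i.succ ^ (i : ℕ) * d i.succ := by
      intro i; rw [Fin.val_succ, pow_succ]
    rw [Finset.prod_congr rfl fun i _ => this i, Finset.prod_mul_distrib]
    exact (mul_comm _ _)

open LSeries Complex
open scoped LSeries.notation

lemma term_shift (f : ℕ → ℂ) (s : ℂ) (n : ℕ) :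
    LSeries.term (fun m => (m : ℂ) * f m) s n = LSeries.term f (s - 1) n := by
  rcases eq_or_ne n 0 with rfl | hn
  · simp [LSeries.term]
  · rw [LSeries.term_of_ne_zero hn, LSeries.term_of_ne_zero hn]
    have hn' : (n : ℂ) ≠ 0 := Nat.cast_ne_zero.mpr hn
    rw [cpow_sub _ _ hn', cpow_one, div_div_eq_mul_div, mul_comm (f n)]

lemma summable_shift (f : ℕ → ℂ) (s : ℂ) :
    LSeriesSummable (fun m => (m : ℂ) * f m) s ↔ LSeriesSummable f (s - 1) := by
  unfold LSeriesSummable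
  exact summable_congr fun n => term_shift f s n

lemma LSeries_shift (f : ℕ → ℂ) (s : ℂ) :
    LSeries (fun m => (m : ℂ) * f m) s = LSeries f (s - 1) := by
  unfold LSeries
  exact tsum_congr fun n => term_shift f s n

lemma cf_zero_fun : (fun n => (cf 0 n : ℂ)) = LSeries.delta := by
  funext n
  rw [cf_zero, LSeries.delta]
  split_ifs <;> simp

lemma cf_succ_conv (h : ℕ) : ∀ {n : ℕ}, n ≠ 0 →
    (cf (h + 1) n : ℂ) = (((1 : ℕ → ℂ)) ⍟ (fun m => (m : ℂ) * (cf h m))) n := by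
  intro n hn
  rw [LSeries.convolution_def, cf_succ h hn]
  push_cast
  refine Finset.sum_congr rfl fun p hp => ?_
  rw [Pi.one_apply, one_mul]

lemma cf_summable : ∀ h : ℕ, ∀ s : ℂ, (h : ℝ) < s.re →
    LSeriesSummable (fun n => (cf h n : ℂ)) s := by
  intro h
  induction h with
  | zero =>
    intro s _
    rw [cf_zero_fun]
    unfold LSeriesSummable
    refine summable_of_ne_finset_zero (s := {1}) fun n hn => ?_
    rw [LSeries.term_delta]
    simp only [Finset.mem_singleton] at hn
    simp [hn]
  | succ h ih =>
    intro s hs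
    rw [LSeriesSummable_congr s (cf_succ_conv h)]
    have h1 : LSeriesSummable (1 : ℕ → ℂ) s := by
      rw [LSeriesSummable_one_iff]
      have : (1 : ℝ) ≤ (h + 1 : ℕ) := by exact_mod_cast Nat.one_le_iff_ne_zero.mpr (by omega)
      linarith
    have h2 : LSeriesSummable (fun m => (m : ℂ) * (cf h m)) s := by
      rw [summable_shift]
      refine ih (s - 1) ?_
      rw [Complex.sub_re, Complex.one_re]
      push_cast at hs ⊢
      linarith
    exact h1.convolution h2

lemma cf_LSeries : ∀ h : ℕ, ∀ s : ℂ, (h : ℝ) < s.re →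
    LSeries (fun n => (cf h n : ℂ)) s = ∏ j ∈ Finset.range h, riemannZeta (s - (j : ℕ)) := by
  intro h
  induction h with
  | zero =>
    intro s _
    rw [cf_zero_fun, LSeries_delta]
    simp
  | succ h ih =>
    intro s hs
    have hs1 : 1 < s.re := by
      have : (1 : ℝ) ≤ (h + 1 : ℕ) := by exact_mod_cast Nat.one_le_iff_ne_zero.mpr (by omega)
      linarith
    have h1 : LSeriesSummable (1 : ℕ → ℂ) s := LSeriesSummable_one_iff.mpr hs1
    have h2 : LSeriesSummable (fun m => (m : ℂ) * (cf h m)) s := by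
      rw [summable_shift]
      refine cf_summable h (s - 1) ?_
      rw [Complex.sub_re, Complex.one_re]
      push_cast at hs ⊢
      linarith
    rw [LSeries_congr (cf_succ_conv h) s, LSeries_convolution' h1 h2,
      LSeries_one_eq_riemannZeta hs1, LSeries_shift]
    rw [ih (s - 1) (by rw [Complex.sub_re, Complex.one_re]; push_cast at hs ⊢; linarith)]
    rw [Finset.prod_range_succ']
    have : ∀ j : ℕ, s - 1 - (j : ℕ) = s - ((j + 1 : ℕ) : ℂ) := by
      intro j; push_cast; ring
    rw [Finset.prod_congr rfl fun j _ => congrArg riemannZeta (this j)]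
    push_cast
    rw [mul_comm]
    norm_num


open AddSubgroup

section Alg

variable {A : Type*} [AddCommGroup A]

/-- The subgroup of `ℤ × A` built from `d`, a finite-index subgroup `K`, and a coset `v`. -/
def HH (d : ℕ) (K : AddSubgroup A) (v : A ⧸ K) : AddSubgroup (ℤ × A) :=
  AddSubgroup.comap ((AddMonoidHom.id ℤ).prodMap (QuotientAddGroup.mk' K))
    (AddSubgroup.zmultiples ((d : ℤ), v))

lemma mem_HH {d : ℕ} {K : AddSubgroup A} {v : A ⧸ K} {t : ℤ} {a : A} :
    (t, a) ∈ HH d K v ↔ ∃ m : ℤ, m * d = t ∧ m • v = (a : A ⧸ K) := by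
  simp only [HH, AddSubgroup.mem_comap, AddMonoidHom.coe_prodMap, Prod.map_apply,
    AddMonoidHom.id_apply, QuotientAddGroup.mk'_apply, AddSubgroup.mem_zmultiples_iff,
    Prod.smul_mk, Prod.mk.injEq, smul_eq_mul]


lemma zmultiples_one_eq_ker {F : Type*} [AddCommGroup F] (v : F) :
    AddSubgroup.zmultiples ((1 : ℤ), v)
      = (AddMonoidHom.mk' (fun p : ℤ × F => p.2 - p.1 • v)
          (by intro p q; simp only [Prod.snd_add, Prod.fst_add, add_smul]; abel)).ker := by
  ext ⟨t, f⟩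
  simp only [AddSubgroup.mem_zmultiples_iff, AddMonoidHom.mem_ker, AddMonoidHom.mk'_apply,
    Prod.smul_mk, Prod.mk.injEq, smul_eq_mul, mul_one, sub_eq_zero]
  constructor
  · rintro ⟨k, rfl, hk⟩; exact hk.symm
  · rintro h; exact ⟨t, rfl, h.symm⟩

lemma index_zmultiples_one {F : Type*} [AddCommGroup F] (v : F) :
    (AddSubgroup.zmultiples ((1 : ℤ), v)).index = Nat.card F := by
  rw [zmultiples_one_eq_ker v, AddSubgroup.index_ker]
  have hsurj : Function.Surjective (AddMonoidHom.mk' (fun p : ℤ × F => p.2 - p.1 • v)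
      (by intro p q; simp only [Prod.snd_add, Prod.fst_add, add_smul]; abel)) :=
    fun f => ⟨(0, f), by simp⟩
  rw [AddMonoidHom.range_eq_top_of_surjective _ hsurj]
  exact Nat.card_congr AddSubgroup.topEquiv.toEquiv

lemma index_HH {d : ℕ} (hd : d ≠ 0) (K : AddSubgroup A) (v : A ⧸ K) :
    (HH d K v).index = K.index * d := by
  classical
  have hsurj : Function.Surjective
      ((AddMonoidHom.id ℤ).prodMap (QuotientAddGroup.mk' K)) :=
    Function.Surjective.prodMap Function.surjective_id (QuotientAddGroup.mk'_surjective K)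
  rw [HH, AddSubgroup.index_comap_of_surjective _ hsurj]
  set φ : ℤ × (A ⧸ K) →+ ℤ × (A ⧸ K) :=
    (zmultiplesHom ℤ ((d : ℤ))).prodMap (AddMonoidHom.id (A ⧸ K)) with hφ
  have hcomp : ∀ k : ℤ, φ (k • ((1 : ℤ), v)) = k • ((d : ℤ), v) := by
    intro k
    simp [hφ, Prod.smul_mk, smul_eq_mul, mul_comm]
  have hmap : AddSubgroup.zmultiples ((d : ℤ), v)
      = AddSubgroup.map φ (AddSubgroup.zmultiples ((1 : ℤ), v)) := by
    apply le_antisymm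
    · rintro p hp
      obtain ⟨k, hk⟩ := AddSubgroup.mem_zmultiples_iff.mp hp
      exact AddSubgroup.mem_map.mpr ⟨k • ((1 : ℤ), v),
        AddSubgroup.mem_zmultiples_iff.mpr ⟨k, rfl⟩, by rw [hcomp, hk]⟩
    · rintro p hp
      obtain ⟨x, hx, hxφ⟩ := AddSubgroup.mem_map.mp hp
      obtain ⟨k, hk⟩ := AddSubgroup.mem_zmultiples_iff.mp hx
      exact AddSubgroup.mem_zmultiples_iff.mpr ⟨k, by rw [← hxφ, ← hk, hcomp]⟩
  have hinj : Function.Injective φ := by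
    rw [hφ, AddMonoidHom.coe_prodMap]
    refine Function.Injective.prodMap ?_ Function.injective_id
    intro a b hab
    simp only [zmultiplesHom_apply, smul_eq_mul] at hab
    exact mul_right_cancel₀ (by exact_mod_cast hd) hab
  rw [hmap, AddSubgroup.index_map, (AddMonoidHom.ker_eq_bot_iff φ).mpr hinj, sup_bot_eq,
    index_zmultiples_one]
  have hrange : φ.range = (AddSubgroup.zmultiples ((d : ℤ))).prod ⊤ := by
    ext ⟨t, f⟩
    constructor
    · rintro ⟨⟨p1, p2⟩, h1⟩
      have h1' : (p1 • (d : ℤ), p2) = (t, f) := h1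
      rw [Prod.mk.injEq] at h1'
      exact AddSubgroup.mem_prod.mpr ⟨AddSubgroup.mem_zmultiples_iff.mpr ⟨p1, h1'.1⟩,
        AddSubgroup.mem_top f⟩
    · rintro hmem
      obtain ⟨h1, -⟩ := AddSubgroup.mem_prod.mp hmem
      obtain ⟨k, hk⟩ := AddSubgroup.mem_zmultiples_iff.mp h1
      exact ⟨(k, f), by rw [Prod.mk.injEq]; exact ⟨hk, rfl⟩⟩
  rw [hrange, AddSubgroup.index_prod, AddSubgroup.index_top, mul_one, Int.index_zmultiples,
    Int.natAbs_natCast, AddSubgroup.index_eq_card]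

lemma map_fst_HH (d : ℕ) (K : AddSubgroup A) (v : A ⧸ K) :
    AddSubgroup.map (AddMonoidHom.fst ℤ A) (HH d K v) = AddSubgroup.zmultiples ((d : ℤ)) := by
  ext t
  simp only [AddSubgroup.mem_map, AddMonoidHom.coe_fst]
  constructor
  · rintro ⟨⟨t', a⟩, hmem, rfl⟩
    obtain ⟨m, hm1, -⟩ := mem_HH.mp hmem
    exact AddSubgroup.mem_zmultiples_iff.mpr ⟨m, by rw [smul_eq_mul, hm1]⟩
  · rintro ht
    obtain ⟨m, hm⟩ := AddSubgroup.mem_zmultiples_iff.mp ht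
    obtain ⟨a, ha⟩ := QuotientAddGroup.mk'_surjective K (m • v)
    exact ⟨(t, a), mem_HH.mpr ⟨m, by rw [← hm, smul_eq_mul], ha.symm⟩, rfl⟩

lemma comap_inr_HH {d : ℕ} (hd : d ≠ 0) (K : AddSubgroup A) (v : A ⧸ K) :
    AddSubgroup.comap (AddMonoidHom.inr ℤ A) (HH d K v) = K := by
  ext a
  rw [AddSubgroup.mem_comap]
  change (0, a) ∈ HH d K v ↔ _
  rw [mem_HH]
  constructor
  · rintro ⟨m, hm1, hm2⟩
    have hm0 : m = 0 := by
      rcases mul_eq_zero.mp hm1 with h | h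
      · exact h
      · exact absurd (by exact_mod_cast h) hd
    rw [hm0, zero_smul] at hm2
    rw [← QuotientAddGroup.eq_zero_iff]
    exact hm2.symm
  · intro ha
    refine ⟨0, by rw [zero_mul], ?_⟩
    rw [zero_smul, eq_comm, QuotientAddGroup.eq_zero_iff]
    exact ha

lemma mk_eq_of_mem_HH {d : ℕ} (hd : d ≠ 0) {K : AddSubgroup A} {v : A ⧸ K} {a : A}
    (h : ((d : ℤ), a) ∈ HH d K v) : v = (a : A ⧸ K) := by
  obtain ⟨m, hm1, hm2⟩ := mem_HH.mp h
  have : m = 1 := by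
    have hd' : (d : ℤ) ≠ 0 := by exact_mod_cast hd
    have := mul_right_cancel₀ hd' (by rw [hm1, one_mul] : m * (d : ℤ) = 1 * (d : ℤ))
    exact this
  rw [this, one_smul] at hm2
  exact hm2

lemma exists_HH_repr (H : AddSubgroup (ℤ × A)) (hH : H.index ≠ 0) :
    ∃ (d : ℕ) (K : AddSubgroup A) (v : A ⧸ K), d ≠ 0 ∧ H = HH d K v := by
  classical
  set P := AddSubgroup.map (AddMonoidHom.fst ℤ A) H with hP
  obtain ⟨g, hg⟩ := Int.subgroup_cyclic P
  have hPz : P = AddSubgroup.zmultiples g := by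
    rw [hg, AddSubgroup.zmultiples_eq_closure]
  have hle : H ≤ AddSubgroup.comap (AddMonoidHom.fst ℤ A) P := fun x hx =>
    AddSubgroup.mem_comap.mpr (AddSubgroup.mem_map_of_mem _ hx)
  have hPind : P.index ≠ 0 := by
    have h1 : (AddSubgroup.comap (AddMonoidHom.fst ℤ A) P).index = P.index :=
      AddSubgroup.index_comap_of_surjective _ Prod.fst_surjective
    have h2 := AddSubgroup.index_dvd_of_le hle
    rw [h1] at h2
    exact fun h0 => hH (Nat.eq_zero_of_zero_dvd (h0 ▸ h2))
  have hg0 : g ≠ 0 := by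
    rintro rfl
    rw [hPz] at hPind
    apply hPind
    have : (AddSubgroup.zmultiples (0 : ℤ)) = ⊥ := by
      ext x; simp [AddSubgroup.mem_zmultiples_iff]
    rw [this, AddSubgroup.index_bot]
    exact Nat.card_eq_zero_of_infinite
  set d := g.natAbs with hdg
  have hd : d ≠ 0 := Int.natAbs_ne_zero.mpr hg0
  have hPd : P = AddSubgroup.zmultiples ((d : ℤ)) := by
    rw [hPz, hdg, Int.zmultiples_natAbs]
  have hdP : (d : ℤ) ∈ P := hPd ▸ AddSubgroup.mem_zmultiples _
  obtain ⟨x, hxH, hx1⟩ := AddSubgroup.mem_map.mp hdP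
  set K := AddSubgroup.comap (AddMonoidHom.inr ℤ A) H with hK
  refine ⟨d, K, ((x.2 : A) : A ⧸ K), hd, ?_⟩
  have hx1' : x.1 = (d : ℤ) := hx1
  have hmemK : ∀ b : A, b ∈ K ↔ ((0 : ℤ), b) ∈ H := fun b => Iff.rfl
  ext ⟨t, a⟩
  rw [mem_HH]
  constructor
  · intro hta
    have htP : t ∈ P := ⟨(t, a), hta, rfl⟩
    obtain ⟨m, hm⟩ := AddSubgroup.mem_zmultiples_iff.mp (hPd ▸ htP)
    rw [smul_eq_mul] at hm
    refine ⟨m, hm, ?_⟩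
    have heq : (t, a) - m • x = (0, a - m • x.2) := by
      apply Prod.ext
      · simp only [Prod.fst_sub, Prod.smul_fst, smul_eq_mul, hx1', hm, sub_self]
      · simp only [Prod.snd_sub, Prod.smul_snd]
    have hsub : ((0 : ℤ), a - m • x.2) ∈ H := by
      rw [← heq]
      exact AddSubgroup.sub_mem _ hta (AddSubgroup.zsmul_mem _ hxH m)
    have hzero : ((a - m • x.2 : A) : A ⧸ K) = 0 :=
      (QuotientAddGroup.eq_zero_iff _).mpr ((hmemK _).mpr hsub)
    rw [QuotientAddGroup.mk_sub, sub_eq_zero] at hzero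
    rw [QuotientAddGroup.mk_zsmul] at hzero
    exact hzero.symm
  · rintro ⟨m, hm1, hm2⟩
    have hsnd : a - m • x.2 ∈ K := by
      have h0 : ((a - m • x.2 : A) : A ⧸ K) = 0 := by
        rw [QuotientAddGroup.mk_sub, QuotientAddGroup.mk_zsmul, hm2, sub_self]
      exact (QuotientAddGroup.eq_zero_iff _).mp h0
    have heq : (t, a) = m • x + ((0 : ℤ), a - m • x.2) := by
      apply Prod.ext
      · simp only [Prod.fst_add, Prod.smul_fst, smul_eq_mul, hx1', add_zero, hm1]
      · simp only [Prod.snd_add, Prod.smul_snd]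
        abel
    rw [heq]
    exact AddSubgroup.add_mem _ (AddSubgroup.zsmul_mem _ hxH m) ((hmemK _).mp hsnd)

lemma nat_card_sigma {ι : Type*} [Fintype ι] {β : ι → Type*} [∀ i, Finite (β i)] :
    Nat.card (Σ i, β i) = ∑ i, Nat.card (β i) := by
  letI : ∀ i, Fintype (β i) := fun i => Fintype.ofFinite _
  simp only [Nat.card_eq_fintype_card, Fintype.card_sigma]

lemma card_inner (e : ℕ) (he : e ≠ 0) [Finite {K : AddSubgroup A // K.index = e}] :
    Nat.card (Σ K : {K : AddSubgroup A // K.index = e}, A ⧸ K.1)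
      = e * Nat.card {K : AddSubgroup A // K.index = e} := by
  classical
  letI : Fintype {K : AddSubgroup A // K.index = e} := Fintype.ofFinite _
  haveI : ∀ K : {K : AddSubgroup A // K.index = e}, Finite (A ⧸ K.1) := by
    intro K
    haveI : K.1.FiniteIndex := ⟨by rw [K.2]; exact he⟩
    infer_instance
  rw [nat_card_sigma]
  have hcard : ∀ K : {K : AddSubgroup A // K.index = e}, Nat.card (A ⧸ K.1) = e := by
    intro K
    rw [← AddSubgroup.index_eq_card, K.2]
  rw [Finset.sum_congr rfl (fun K _ => hcard K), Finset.sum_const, smul_eq_mul,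
    Finset.card_univ, Nat.card_eq_fintype_card, mul_comm]

theorem card_step (n : ℕ) (hn : n ≠ 0)
    (hfin : ∀ e, e ≠ 0 → Finite {K : AddSubgroup A // K.index = e}) :
    Finite {H : AddSubgroup (ℤ × A) // H.index = n} ∧
    Nat.card {H : AddSubgroup (ℤ × A) // H.index = n}
      = ∑ p ∈ n.divisorsAntidiagonal, p.2 * Nat.card {K : AddSubgroup A // K.index = p.2} := by
  classical
  have hdmem : ∀ p : ℕ × ℕ, p ∈ n.divisorsAntidiagonal → p.1 ≠ 0 ∧ p.2 ≠ 0 ∧ p.1 * p.2 = n := by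
    intro p hp
    obtain ⟨h1, h2⟩ := Nat.mem_divisorsAntidiagonal.mp hp
    exact ⟨fun h0 => h2 (by rw [← h1, h0, zero_mul]),
      fun h0 => h2 (by rw [← h1, h0, mul_zero]), h1⟩
  let Φ : (Σ p : ↥(n.divisorsAntidiagonal),
        Σ K : {K : AddSubgroup A // K.index = (p : ℕ × ℕ).2}, A ⧸ K.1) →
      {H : AddSubgroup (ℤ × A) // H.index = n} := fun x =>
    ⟨HH (x.1 : ℕ × ℕ).1 x.2.1.1 x.2.2, by
      obtain ⟨hd, he, hmul⟩ := hdmem _ x.1.2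
      rw [index_HH hd, x.2.1.2, mul_comm, hmul]⟩
  have hbij : Function.Bijective Φ := by
    constructor
    · rintro ⟨⟨⟨d, e⟩, hp⟩, ⟨K, hK⟩, v⟩ ⟨⟨⟨d', e'⟩, hp'⟩, ⟨K', hK'⟩, v'⟩ hΦ
      have hHH : HH d K v = HH d' K' v' := Subtype.ext_iff.mp hΦ
      obtain ⟨hd, he, hmul⟩ := hdmem _ hp
      obtain ⟨hd', he', hmul'⟩ := hdmem _ hp'
      have hdd : d = d' := by
        have h1 := congrArg (AddSubgroup.map (AddMonoidHom.fst ℤ A)) hHH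
        rw [map_fst_HH, map_fst_HH] at h1
        have h2 := congrArg AddSubgroup.index h1
        rwa [Int.index_zmultiples, Int.index_zmultiples, Int.natAbs_natCast,
          Int.natAbs_natCast] at h2
      subst hdd
      have hee : e = e' := Nat.eq_of_mul_eq_mul_left (Nat.pos_of_ne_zero hd)
        (by rw [hmul, hmul'])
      subst hee
      have hKK : K = K' := by
        have h1 := comap_inr_HH hd K v
        have h2 := comap_inr_HH hd K' v'
        rw [← h1, ← h2, hHH]
      subst hKK
      have hvv : v = v' := by
        obtain ⟨a, ha⟩ := QuotientAddGroup.mk'_surjective K v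
        have hmem : ((d : ℤ), a) ∈ HH d K v :=
          mem_HH.mpr ⟨1, one_mul _, by rw [one_smul, ← ha]; rfl⟩
        have h3 := mk_eq_of_mem_HH hd (hHH ▸ hmem)
        rw [h3, ← ha]; rfl
      subst hvv
      rfl
    · rintro ⟨H, hind⟩
      obtain ⟨d, K, v, hd, rfl⟩ := exists_HH_repr H (by rw [hind]; exact hn)
      rw [index_HH hd K v] at hind
      have he : K.index ≠ 0 := fun h0 => hn (by rw [← hind, h0, zero_mul])
      refine ⟨⟨⟨(d, K.index), ?_⟩, ⟨K, rfl⟩, v⟩, ?_⟩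
      · rw [Nat.mem_divisorsAntidiagonal]
        exact ⟨by rw [mul_comm]; exact hind, hn⟩
      · apply Subtype.ext
        rfl
  haveI hfinp : ∀ p : ↥(n.divisorsAntidiagonal),
      Finite (Σ K : {K : AddSubgroup A // K.index = (p : ℕ × ℕ).2}, A ⧸ K.1) := by
    intro p
    obtain ⟨-, he, -⟩ := hdmem _ p.2
    haveI := hfin _ he
    haveI : ∀ K : {K : AddSubgroup A // K.index = (p : ℕ × ℕ).2}, Finite (A ⧸ K.1) := by
      intro K
      haveI : K.1.FiniteIndex := ⟨by rw [K.2]; exact he⟩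
      infer_instance
    infer_instance
  constructor
  · exact Finite.of_equiv _ (Equiv.ofBijective Φ hbij)
  · rw [← Nat.card_congr (Equiv.ofBijective Φ hbij), nat_card_sigma]
    have hcongr : ∀ p : ↥(n.divisorsAntidiagonal),
        Nat.card (Σ K : {K : AddSubgroup A // K.index = (p : ℕ × ℕ).2}, A ⧸ K.1)
          = (p : ℕ × ℕ).2 * Nat.card {K : AddSubgroup A // K.index = (p : ℕ × ℕ).2} := by
      intro p
      obtain ⟨-, he, -⟩ := hdmem _ p.2
      haveI := hfin _ he
      exact card_inner _ he
    calc (∑ p : ↥(n.divisorsAntidiagonal),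
            Nat.card (Σ K : {K : AddSubgroup A // K.index = (p : ℕ × ℕ).2}, A ⧸ K.1))
        = ∑ p : ↥(n.divisorsAntidiagonal),
            (p : ℕ × ℕ).2 * Nat.card {K : AddSubgroup A // K.index = (p : ℕ × ℕ).2} :=
          Finset.sum_congr rfl (fun p _ => hcongr p)
      _ = ∑ p ∈ n.divisorsAntidiagonal, p.2 * Nat.card {K : AddSubgroup A // K.index = p.2} :=
          Finset.sum_coe_sort _ (fun p : ℕ × ℕ => p.2 * Nat.card {K : AddSubgroup A // K.index = p.2})

end Alg


lemma index_map_addEquiv {G G' : Type*} [AddGroup G] [AddGroup G'] (σ : G ≃+ G')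
    (H : AddSubgroup G) : (H.map σ.toAddMonoidHom).index = H.index := by
  rw [AddSubgroup.index_map, AddMonoidHom.range_eq_top_of_surjective _ σ.surjective,
    AddSubgroup.index_top, mul_one, (AddMonoidHom.ker_eq_bot_iff _).mpr σ.injective,
    sup_bot_eq]

/-- The transport of finite-index-subgroup counting along an additive equivalence. -/
def subgroupCountEquiv {G G' : Type*} [AddGroup G] [AddGroup G'] (σ : G ≃+ G') (n : ℕ) :
    {H : AddSubgroup G // H.index = n} ≃ {H : AddSubgroup G' // H.index = n} := by
  have hround : ∀ (H : AddSubgroup G),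
      (H.map σ.toAddMonoidHom).map σ.symm.toAddMonoidHom = H := by
    intro H
    rw [AddSubgroup.map_map]
    have : σ.symm.toAddMonoidHom.comp σ.toAddMonoidHom = AddMonoidHom.id G := by
      ext x; simp
    rw [this, AddSubgroup.map_id]
  have hround' : ∀ (H : AddSubgroup G'),
      (H.map σ.symm.toAddMonoidHom).map σ.toAddMonoidHom = H := by
    intro H
    rw [AddSubgroup.map_map]
    have : σ.toAddMonoidHom.comp σ.symm.toAddMonoidHom = AddMonoidHom.id G' := by
      ext x; simp
    rw [this, AddSubgroup.map_id]
  exact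
    { toFun := fun H => ⟨H.1.map σ.toAddMonoidHom, (index_map_addEquiv σ H.1).trans H.2⟩
      invFun := fun H =>
        ⟨H.1.map σ.symm.toAddMonoidHom, (index_map_addEquiv σ.symm H.1).trans H.2⟩
      left_inv := fun H => Subtype.ext (hround H.1)
      right_inv := fun H => Subtype.ext (hround' H.1) }

/-- Splitting off the first coordinate of `ℤ^(h+1)`. -/
def splitIso (h : ℕ) : (Fin (h + 1) → ℤ) ≃+ ℤ × (Fin h → ℤ) where
  toFun f := (f 0, Fin.tail f)
  invFun p := Fin.cons p.1 p.2
  left_inv f := Fin.cons_self_tail f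
  right_inv p := by
    dsimp only
    refine Prod.ext ?_ ?_
    · exact Fin.cons_zero (α := fun _ => ℤ) p.1 p.2
    · exact Fin.tail_cons (α := fun _ => ℤ) p.1 p.2
  map_add' f g := rfl

lemma index_of_subsingleton {M : Type*} [AddCommGroup M] [Subsingleton M]
    (H : AddSubgroup M) : H.index = 1 := by
  rw [AddSubgroup.index_eq_one]
  ext x
  simp only [AddSubgroup.mem_top, iff_true]
  rw [Subsingleton.elim x 0]
  exact H.zero_mem

theorem main_count (h : ℕ) : ∀ n : ℕ, n ≠ 0 →
    Finite {H : AddSubgroup (Fin h → ℤ) // H.index = n} ∧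
    Nat.card {H : AddSubgroup (Fin h → ℤ) // H.index = n} = cf h n := by
  induction h with
  | zero =>
    intro n hn
    haveI : Subsingleton (Fin 0 → ℤ) := ⟨fun f g => funext fun i => i.elim0⟩
    rcases eq_or_ne n 1 with rfl | hn1
    · haveI : Subsingleton {H : AddSubgroup (Fin 0 → ℤ) // H.index = 1} := by
        constructor
        rintro ⟨H, hH⟩ ⟨H', hH'⟩
        refine Subtype.ext ?_
        ext x
        have hx : x = 0 := Subsingleton.elim x 0
        subst hx
        simp only [AddSubgroup.zero_mem]
      haveI : Nonempty {H : AddSubgroup (Fin 0 → ℤ) // H.index = 1} :=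
        ⟨⟨⊤, index_of_subsingleton ⊤⟩⟩
      refine ⟨Finite.of_subsingleton, ?_⟩
      rw [cf_zero, if_pos rfl, Nat.card_eq_one_iff_unique]
      exact ⟨inferInstance, inferInstance⟩
    · haveI : IsEmpty {H : AddSubgroup (Fin 0 → ℤ) // H.index = n} := by
        constructor
        rintro ⟨H, hH⟩
        exact hn1 (hH ▸ (index_of_subsingleton H).symm ▸ rfl)
      refine ⟨Finite.of_subsingleton, ?_⟩
      rw [Nat.card_of_isEmpty, cf_zero, if_neg hn1]
  | succ h ih =>
    intro n hn
    have hfin : ∀ e, e ≠ 0 → Finite {K : AddSubgroup (Fin h → ℤ) // K.index = e} :=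
      fun e he => (ih e he).1
    obtain ⟨hF, hC⟩ := card_step (A := Fin h → ℤ) n hn hfin
    have E := subgroupCountEquiv (splitIso h) n
    constructor
    · exact Finite.of_equiv _ E.symm
    · rw [Nat.card_congr E, hC, cf_succ h hn]
      refine Finset.sum_congr rfl fun p hp => ?_
      obtain ⟨h1, h2⟩ := Nat.mem_divisorsAntidiagonal.mp hp
      have hp2 : p.2 ≠ 0 := fun h0 => h2 (by rw [← h1, h0, mul_zero])
      rw [(ih p.2 hp2).2]

/-- The number of subgroups of index `n` in `ℤ^h`. -/
noncomputable def subgroupCount (h n : ℕ) : ℕ :=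
  Nat.card {H : AddSubgroup (Fin h → ℤ) // H.index = n}

/-- The subgroup zeta function of the free abelian group of rank `h` equals
`ζ(s)ζ(s-1)⋯ζ(s-h+1)`; equivalently, for every `n ≥ 1`, the number of subgroups of
index `n` in `ℤ^h` equals the `n`-th Dirichlet coefficient of this product, i.e.
`∑_{d₁⋯d_h = n} d₂ d₃² ⋯ d_h^{h-1}`. -/
theorem subgroup_zeta_of_free_abelian (h : ℕ) :
    (∀ s : ℂ, (h : ℝ) < s.re →
      LSeries (fun n => (subgroupCount h n : ℂ)) s
        = ∏ j ∈ Finset.range h, riemannZeta (s - (j : ℕ))) ∧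
    (∀ n : ℕ, 1 ≤ n →
      subgroupCount h n
        = ∑ d ∈ (Fintype.piFinset fun _ : Fin h => Finset.range (n + 1)).filter
            (fun d => ∏ i, d i = n), ∏ i : Fin h, d i ^ (i : ℕ)) := by
  have key : ∀ n : ℕ, n ≠ 0 → subgroupCount h n = cf h n := by
    intro n hn
    exact (main_count h n hn).2
  constructor
  · intro s hs
    have hcoef : ∀ {m : ℕ}, m ≠ 0 → ((subgroupCount h m : ℂ)) = ((cf h m : ℕ) : ℂ) := by
      intro m hm
      exact_mod_cast congrArg (Nat.cast (R := ℂ)) (key m hm)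
    rw [LSeries_congr hcoef s]
    exact cf_LSeries h s hs
  · intro n hn
    have := key n (by omega)
    rw [cf] at this
    exact this
end

section
/- Let L be a nilpotent Lie ring over ℤ, additively free of rank h, of nilpotency class c, and let B be a finite-index subring of L containing the set Z = {x ∈ L : nx ∈ γ_c(L) for some n ∈ ℕ}. Then γ_c(B) ⊇ [L:B]^{c-1} · γ_c(L). -/
/-- `gammaSub L A i` is the `(i+1)`-st term of the lower central series of the Lie subring
determined by the additive subgroup `A` of the Lie ring `L` (assuming `A` is closed under
the bracket): `gammaSub L A 0 = A` and
`gammaSub L A (i+1) = ⟨[gammaSub L A i, A]⟩`.  In particular `γ_c(L) = gammaSub L ⊤ (c-1)`. -/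
def gammaSub (L : Type*) [LieRing L] (A : AddSubgroup L) : ℕ → AddSubgroup L
  | 0 => A
  | i + 1 => AddSubgroup.closure {z | ∃ x ∈ gammaSub L A i, ∃ y ∈ A, z = ⁅x, y⁆}

namespace GammaAux

variable {L : Type*} [LieRing L]

/-- Left-normed bracket along a list. -/
def lb : L → List L → L
  | x, [] => x
  | x, y :: t => lb ⁅x, y⁆ t

@[simp] lemma lb_nil (x : L) : lb x ([] : List L) = x := rfl
@[simp] lemma lb_cons (x y : L) (t : List L) : lb x (y :: t) = lb ⁅x, y⁆ t := rfl

/-- Bracketing on the left as an additive hom. -/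
def brkL (y : L) : L →+ L := AddMonoidHom.mk' (fun x => ⁅x, y⁆) (fun a b => add_lie a b y)

/-- Bracketing on the right as an additive hom. -/
def brkR (x : L) : L →+ L := AddMonoidHom.mk' (fun y => ⁅x, y⁆) (fun a b => lie_add x a b)

lemma zsmul_lie' (z : ℤ) (x y : L) : ⁅z • x, y⁆ = z • ⁅x, y⁆ := map_zsmul (brkL y) z x
lemma lie_zsmul' (z : ℤ) (x y : L) : ⁅x, z • y⁆ = z • ⁅x, y⁆ := map_zsmul (brkR x) z y

lemma lb_zero : ∀ t : List L, lb (0 : L) t = 0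
  | [] => rfl
  | y :: t => by rw [lb_cons, zero_lie]; exact lb_zero t

lemma lb_zsmul (z : ℤ) : ∀ (t : List L) (x : L), lb (z • x) t = z • lb x t
  | [], x => rfl
  | y :: t, x => by rw [lb_cons, zsmul_lie', lb_zsmul z t, lb_cons]

lemma lb_append (t : List L) : ∀ (x : L) (y : L), lb x (t ++ [y]) = ⁅lb x t, y⁆ := by
  induction t with
  | nil => intro x y; rfl
  | cons a t ih => intro x y; simpa using ih ⁅x, a⁆ y

lemma lb_mem (B : AddSubgroup L) :
    ∀ (t : List L) (j : ℕ) (x : L), x ∈ gammaSub L B j → (∀ y ∈ t, y ∈ B) →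
      lb x t ∈ gammaSub L B (j + t.length) := by
  intro t
  induction t with
  | nil => intro j x hx _; simpa using hx
  | cons a t ih =>
    intro j x hx hmem
    have hb : ⁅x, a⁆ ∈ gammaSub L B (j + 1) :=
      AddSubgroup.subset_closure ⟨x, hx, a, hmem a List.mem_cons_self, rfl⟩
    have := ih (j + 1) ⁅x, a⁆ hb (fun y hy => hmem y (List.mem_cons_of_mem a hy))
    rw [lb_cons]
    convert this using 2
    simp; omega

lemma bracket_mem_closure {S S' : Set L} {x y : L} (hx : x ∈ AddSubgroup.closure S)
    (hy : y ∈ AddSubgroup.closure S') :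
    ⁅x, y⁆ ∈ AddSubgroup.closure {z | ∃ s ∈ S, ∃ t ∈ S', z = ⁅s, t⁆} := by
  induction hx using AddSubgroup.closure_induction with
  | mem s hs =>
    induction hy using AddSubgroup.closure_induction with
    | mem t ht => exact AddSubgroup.subset_closure ⟨s, hs, t, ht, rfl⟩
    | zero => rw [lie_zero]; exact zero_mem _
    | add a b _ _ ha hb => rw [lie_add]; exact add_mem ha hb
    | neg a _ ha => rw [lie_neg]; exact neg_mem ha
  | zero => rw [zero_lie]; exact zero_mem _
  | add a b _ _ ha hb => rw [add_lie]; exact add_mem ha hb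
  | neg a _ ha => rw [neg_lie]; exact neg_mem ha

lemma list_prod_dvd {ι : Type*} {n : ℤ} {f : ι → ℤ} (hf : ∀ i, f i ∣ n) :
    ∀ l : List ι, (l.map f).prod ∣ n ^ l.length := by
  intro l
  induction l with
  | nil => simp
  | cons a l ih =>
    simp only [List.map_cons, List.prod_cons, List.length_cons]
    rw [pow_succ']
    exact mul_dvd_mul (hf a) ih

end GammaAux

open GammaAux in
/-- Let `L` be a nilpotent Lie ring, additively free of rank `h`, of nilpotency class `c`,
and let `B` be a finite-index subring of `L` containing the isolator
`Z = {x ∈ L : n • x ∈ γ_c(L)` for some `n ∈ ℕ}`.  Then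
`γ_c(B) ⊇ [L:B]^{c-1} · γ_c(L)`. -/
theorem gamma_c_subring_contains (L : Type*) [LieRing L] (h c : ℕ)
    (b : Module.Basis (Fin h) ℤ L) (hc : 1 ≤ c)
    (hclass : gammaSub L ⊤ c = ⊥) (hclass' : gammaSub L ⊤ (c - 1) ≠ ⊥)
    (B : AddSubgroup L)
    (hBsub : ∀ x ∈ B, ∀ y ∈ B, ⁅x, y⁆ ∈ B)
    (hBfin : B.index ≠ 0)
    (hZ : ∀ x : L, (∃ n : ℕ, 0 < n ∧ (n : ℤ) • x ∈ gammaSub L ⊤ (c - 1)) → x ∈ B) :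
    ∀ x ∈ gammaSub L ⊤ (c - 1), ((B.index : ℤ) ^ (c - 1)) • x ∈ gammaSub L B (c - 1) := by
  classical
  intro x hx
  set k := c - 1 with hk
  rcases Nat.eq_zero_or_pos k with hk0 | hkpos
  · -- c = 1 : use hZ directly
    rw [hk0] at hx ⊢
    have hxB : x ∈ B := hZ x ⟨1, one_pos, by rw [hk0]; simpa using hx⟩
    simpa [pow_zero, one_smul] using (show x ∈ gammaSub L B 0 from hxB)
  · -- c ≥ 2 : Smith normal form argument
    set N := AddSubgroup.toIntSubmodule B with hN
    obtain ⟨m, S⟩ := N.smithNormalForm b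
    have hNB : N.toAddSubgroup = B := AddSubgroup.toIntSubmodule_toAddSubgroup B
    have hBidx : N.toAddSubgroup.index ≠ 0 := by rw [hNB]; exact hBfin
    have hm : h = m := by
      have := S.toAddSubgroup_index_ne_zero_iff.mp hBidx
      simpa using this.symm
    subst hm
    -- index as a product
    have hidx : B.index = ∏ i, (S.a i).natAbs := by
      have := S.toAddSubgroup_index_eq_ite
      rw [hNB] at this
      simpa [Int.index_zmultiples] using this
    have hgbij : Function.Bijective S.f := Finite.injective_iff_bijective.mp S.f.injective
    set g : Fin h ≃ Fin h := Equiv.ofBijective S.f hgbij with hg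
    set e : Fin h → L := ⇑S.bM with he
    set d : Fin h → ℤ := fun i => S.a (g.symm i) with hd
    set w : Fin h → L := fun i => (S.bN (g.symm i) : L) with hwdef
    have hw : ∀ i, w i = d i • e i := by
      intro i
      have h1 := S.snf (g.symm i)
      have h2 : S.f (g.symm i) = i := g.apply_symm_apply i
      show (S.bN (g.symm i) : L) = d i • e i
      rw [h1, h2]
    have hwB : ∀ i, w i ∈ B := fun i => (S.bN (g.symm i)).2
    -- divisibilities
    have hdvd1 : ∀ i, d i ∣ (B.index : ℤ) := by
      intro i
      rw [hidx]
      have : (S.a (g.symm i)).natAbs ∣ ∏ j, (S.a j).natAbs :=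
        Finset.dvd_prod_of_mem _ (Finset.mem_univ _)
      exact Int.natAbs_dvd.mp (Int.natCast_dvd_natCast.mpr (by exact_mod_cast this))
    have hdvd2 : ∀ i j, i ≠ j → d i * d j ∣ (B.index : ℤ) := by
      intro i j hij
      rw [hidx]
      have hij' : g.symm i ≠ g.symm j := fun hEq => hij (by simpa using congrArg g hEq)
      have h1 : ({g.symm i, g.symm j} : Finset (Fin h)).prod (fun u => (S.a u).natAbs) ∣
          ∏ u, (S.a u).natAbs :=
        Finset.prod_dvd_prod_of_subset _ _ _ (Finset.subset_univ _)
      rw [Finset.prod_pair hij'] at h1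
      have : (d i * d j).natAbs ∣ ∏ u, (S.a u).natAbs := by
        rw [Int.natAbs_mul]; exact h1
      exact Int.natAbs_dvd.mp (Int.natCast_dvd_natCast.mpr (by exact_mod_cast this))
    -- spanning of top gamma by basis brackets
    have espan : ∀ y : L, y ∈ AddSubgroup.closure (Set.range e) := by
      intro y
      have hy : y ∈ Submodule.span ℤ (Set.range e) := by
        rw [he]
        exact Module.Basis.mem_span S.bM y
      refine Submodule.span_induction ?_ ?_ ?_ ?_ hy
      · exact fun z hz => AddSubgroup.subset_closure hz
      · exact zero_mem _
      · exact fun a b _ _ ha hb => add_mem ha hb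
      · exact fun z a _ ha => AddSubgroup.zsmul_mem _ ha z
    -- T j : left-normed brackets of basis vectors, length j+1
    set T : ℕ → Set L := fun j =>
      {z | ∃ i : Fin h, ∃ t : List (Fin h), t.length = j ∧ z = lb (e i) (t.map e)} with hT
    have gamma_le : ∀ j : ℕ, gammaSub L ⊤ j ≤ AddSubgroup.closure (T j) := by
      intro j
      induction j with
      | zero =>
        intro y _
        refine AddSubgroup.closure_mono ?_ (espan y)
        rintro z ⟨i, rfl⟩
        exact ⟨i, [], rfl, rfl⟩
      | succ j ih =>
        show AddSubgroup.closure _ ≤ _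
        rw [AddSubgroup.closure_le]
        rintro z ⟨u, hu, v, -, rfl⟩
        have h1 := bracket_mem_closure (ih hu) (espan v)
        refine AddSubgroup.closure_mono ?_ h1
        rintro z' ⟨s, ⟨i, t, htl, rfl⟩, s', ⟨i', rfl⟩, rfl⟩
        refine ⟨i, t ++ [i'], by simp [htl], ?_⟩
        rw [List.map_append, List.map_singleton, lb_append]
    -- scaling lemma
    have lb_scale : ∀ (t : List (Fin h)) (y : L),
        lb y (t.map w) = ((t.map d).prod) • lb y (t.map e) := by
      intro t
      induction t with
      | nil => intro y; simp
      | cons a t ih =>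
        intro y
        simp only [List.map_cons, List.prod_cons, lb_cons]
        rw [hw a, lie_zsmul', lb_zsmul, ih, smul_smul]
    -- main computation on generators
    have key : ∀ z ∈ T k, ((B.index : ℤ) ^ k) • z ∈ gammaSub L B k := by
      rintro z ⟨i, t, htl, rfl⟩
      cases t with
      | nil => simp at htl; omega
      | cons i1 t' =>
        by_cases hii : i = i1
        · subst hii
          have hz : lb (e i) ((i :: t').map e) = 0 := by
            rw [List.map_cons, lb_cons, lie_self, lb_zero]
          rw [hz, smul_zero]
          exact zero_mem _
        · have hlen : t'.length + 1 = k := by simpa using htl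
          have hD : (d i * ((i1 :: t').map d).prod) ∣ (B.index : ℤ) ^ k := by
            rw [List.map_cons, List.prod_cons, ← mul_assoc, ← hlen, pow_succ']
            exact mul_dvd_mul (hdvd2 i i1 hii) (list_prod_dvd hdvd1 t')
          obtain ⟨M, hM⟩ := hD
          have hmem : lb (w i) ((i1 :: t').map w) ∈ gammaSub L B k := by
            have h0 : w i ∈ gammaSub L B 0 := hwB i
            have hall : ∀ y ∈ (i1 :: t').map w, y ∈ B := by
              intro y hy
              rcases List.mem_map.mp hy with ⟨u, -, rfl⟩
              exact hwB u
            have := lb_mem B ((i1 :: t').map w) 0 (w i) h0 hall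
            simpa [hlen] using this
          have hcalc : lb (w i) ((i1 :: t').map w)
              = (d i * ((i1 :: t').map d).prod) • lb (e i) ((i1 :: t').map e) := by
            rw [hw i, lb_zsmul, lb_scale, smul_smul, mul_comm (d i)]
          rw [hM, mul_comm, mul_smul, ← hcalc]
          exact AddSubgroup.zsmul_mem _ hmem M
    -- conclude
    have hx' : x ∈ AddSubgroup.closure (T k) := gamma_le k hx
    have hcomap : AddSubgroup.closure (T k) ≤
        (gammaSub L B k).comap (DistribMulAction.toAddMonoidHom L ((B.index : ℤ) ^ k)) := by
      rw [AddSubgroup.closure_le]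
      intro z hz
      exact key z hz
    exact hcomap hx'
end

section
/- Let K be a field of characteristic zero and let A_1 and A_2 be finite-dimensional (not necessarily associative) K-algebras. If A_1 ⊗_K K' ≅ A_2 ⊗_K K' as K'-algebras for some field extension K' of K, then there exists a finite field extension K'' of K such that A_1 ⊗_K K'' ≅ A_2 ⊗_K K'' as K''-algebras. -/
/-!
Choosing bases, an isomorphism `K' ⊗ A₁ ≅ K' ⊗ A₂` is an invertible matrix solving polynomial
equations whose coefficients are the structure constants of `A₁` and `A₂`, hence lie in `K`.
The entries of such a matrix and the inverse of its determinant generate a finitely generated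
`K`-subalgebra `S` of `K'` over which the matrix is already a solution. By Zariski's lemma the
residue field of any maximal ideal of `S` is finite over `K`; embedding it into `AlgebraicClosure K`
and mapping the solution there gives the required finite extension.
-/

open TensorProduct

/-- `A₁ ⊗_K K'` and `A₂ ⊗_K K'` are isomorphic as `K'`-algebras: there is a `K'`-linear
bijection between the base changes which preserves multiplication. -/
def IsIsoAfterBaseChange (K : Type*) [Field K]
    (A₁ A₂ : Type*) [NonUnitalNonAssocRing A₁] [Module K A₁]
    [SMulCommClass K A₁ A₁] [IsScalarTower K A₁ A₁]
    [NonUnitalNonAssocRing A₂] [Module K A₂]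
    [SMulCommClass K A₂ A₂] [IsScalarTower K A₂ A₂]
    (K' : Type*) [Field K'] [Algebra K K'] : Prop :=
  ∃ e : (K' ⊗[K] A₁) ≃ₗ[K'] (K' ⊗[K] A₂), ∀ x y : K' ⊗[K] A₁, e (x * y) = e x * e y

section Multiplication

variable {F T T' ι : Type*} [Field F]
  [NonUnitalNonAssocSemiring T] [Module F T] [SMulCommClass F T T] [IsScalarTower F T T]
  [NonUnitalNonAssocSemiring T'] [Module F T'] [SMulCommClass F T' T'] [IsScalarTower F T' T']

lemma Module.Basis.repr_mul [Fintype ι] (B : Module.Basis ι F T) (x y : T) (k : ι) :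
    B.repr (x * y) k = ∑ i, ∑ j, B.repr x i * B.repr y j * B.repr (B i * B j) k := by
  conv_lhs => rw [← B.sum_repr x, ← B.sum_repr y]
  simp only [Finset.sum_mul, Finset.mul_sum, smul_mul_assoc, mul_smul_comm, map_sum, map_smul,
    Finsupp.coe_finsetSum, Finset.sum_apply, Finsupp.smul_apply, smul_eq_mul]
  rw [Finset.sum_comm]
  exact Finset.sum_congr rfl fun i _ => Finset.sum_congr rfl fun j _ => by ring

lemma LinearMap.map_mul_of_basis (B : Module.Basis ι F T) (f : T →ₗ[F] T')
    (h : ∀ i j, f (B i * B j) = f (B i) * f (B j)) (x y : T) : f (x * y) = f x * f y :=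
  LinearMap.congr_fun₂ (LinearMap.ext_basis B B (B := (LinearMap.mul F T).compr₂ f)
    (B' := (LinearMap.mul F T').compl₁₂ f f) h) x y

end Multiplication

section StructureConstants

variable {K ι : Type*} [Field K]

noncomputable def structConst {A : Type*} [NonUnitalNonAssocRing A] [Module K A]
    (b : Module.Basis ι K A) (i j k : ι) : K :=
  b.repr (b i * b j) k

lemma structConst_baseChange {A : Type*} [NonUnitalNonAssocRing A] [Module K A]
    [SMulCommClass K A A] [IsScalarTower K A A] (F : Type*) [Field F] [Algebra K F]
    (b : Module.Basis ι K A) (i j k : ι) :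
    structConst (b.baseChange F) i j k = algebraMap K F (structConst b i j k) := by
  simp [structConst, Algebra.TensorProduct.tmul_mul_tmul, Algebra.algebraMap_eq_smul_one]

variable [Fintype ι]

/-- Read `m` as the matrix of a linear map `φ` in the base-changed bases; the equations are the
coordinates of `φ (bᵢ * bⱼ) = φ bᵢ * φ bⱼ`. -/
def Intertwines {R : Type*} [CommRing R] [Algebra K R] (c₁ c₂ : ι → ι → ι → K)
    (m : Matrix ι ι R) : Prop :=
  ∀ i j k, ∑ l, m k l * algebraMap K R (c₁ i j l) =
    ∑ p, ∑ q, m p i * m q j * algebraMap K R (c₂ p q k)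

variable {c₁ c₂ : ι → ι → ι → K} {R R' : Type*} [CommRing R] [Algebra K R]
  [CommRing R'] [Algebra K R']

lemma Intertwines.map {m : Matrix ι ι R} (h : Intertwines c₁ c₂ m) (φ : R →ₐ[K] R') :
    Intertwines c₁ c₂ (m.map φ) := by
  intro i j k
  simpa [map_sum, map_mul, AlgHom.commutes] using congrArg φ (h i j k)

lemma Intertwines.of_map {m : Matrix ι ι R} {φ : R →ₐ[K] R'} (hφ : Function.Injective φ)
    (h : Intertwines c₁ c₂ (m.map φ)) : Intertwines c₁ c₂ m := by
  intro i j k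
  apply hφ
  simpa [map_sum, map_mul, AlgHom.commutes] using h i j k

end StructureConstants

section Intertwiners

variable {K ι : Type*} [Field K] [Fintype ι] [DecidableEq ι]

/-- The `R`-points of the closed subscheme of `GL_ι` of isomorphisms between the algebras with
structure constants `c₁` and `c₂`. -/
def HasInvertibleIntertwiner (c₁ c₂ : ι → ι → ι → K) (R : Type*) [CommRing R] [Algebra K R] :
    Prop :=
  ∃ m : Matrix ι ι R, IsUnit m.det ∧ Intertwines c₁ c₂ m

variable {c₁ c₂ : ι → ι → ι → K} {R R' : Type*} [CommRing R] [Algebra K R]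
  [CommRing R'] [Algebra K R']

lemma HasInvertibleIntertwiner.map (h : HasInvertibleIntertwiner c₁ c₂ R) (φ : R →ₐ[K] R') :
    HasInvertibleIntertwiner c₁ c₂ R' := by
  obtain ⟨m, hdet, hm⟩ := h
  exact ⟨m.map φ, by simpa [AlgHom.map_det] using hdet.map φ, hm.map φ⟩

lemma HasInvertibleIntertwiner.exists_fg_subalgebra (h : HasInvertibleIntertwiner c₁ c₂ R) :
    ∃ S : Subalgebra K R, S.FG ∧ HasInvertibleIntertwiner c₁ c₂ S := by
  classical
  obtain ⟨m, hdet, hm⟩ := h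
  let gens : Finset R := insert ↑hdet.unit⁻¹ (Finset.univ.image fun p : ι × ι => m p.1 p.2)
  let S := Algebra.adjoin K (gens : Set R)
  let mS : Matrix ι ι S := fun i j =>
    ⟨m i j, Algebra.subset_adjoin
      (Finset.mem_insert_of_mem (Finset.mem_image_of_mem _ (Finset.mem_univ (i, j))))⟩
  refine ⟨S, ⟨gens, rfl⟩, mS, ?_, hm.of_map (φ := S.val) Subtype.val_injective⟩
  refine .of_mul_eq_one ⟨_, Algebra.subset_adjoin (Finset.mem_insert_self _ _)⟩ ?_
  apply Subtype.val_injective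
  show S.val mS.det * _ = 1
  rw [AlgHom.map_det]
  exact hdet.mul_val_inv

end Intertwiners

section BaseChange

variable {K ι A₁ A₂ : Type*} [Field K] [Fintype ι] [DecidableEq ι]
  [NonUnitalNonAssocRing A₁] [Module K A₁] [SMulCommClass K A₁ A₁] [IsScalarTower K A₁ A₁]
  [NonUnitalNonAssocRing A₂] [Module K A₂] [SMulCommClass K A₂ A₂] [IsScalarTower K A₂ A₂]
  (b₁ : Module.Basis ι K A₁) (b₂ : Module.Basis ι K A₂) (F : Type*) [Field F] [Algebra K F]

lemma map_mul_baseChange_basis_iff_intertwines (f : F ⊗[K] A₁ →ₗ[F] F ⊗[K] A₂) :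
    (∀ i j, f (b₁.baseChange F i * b₁.baseChange F j) =
        f (b₁.baseChange F i) * f (b₁.baseChange F j)) ↔
      Intertwines (structConst b₁) (structConst b₂)
        (LinearMap.toMatrix (b₁.baseChange F) (b₂.baseChange F) f) := by
  set B₁ := b₁.baseChange F
  set B₂ := b₂.baseChange F
  set M := LinearMap.toMatrix B₁ B₂ f
  have repr_map_mul : ∀ i j k, B₂.repr (f (B₁ i * B₁ j)) k =
      ∑ l, M k l * algebraMap K F (structConst b₁ i j l) := by
    intro i j k
    simp only [← LinearMap.toMatrix_mulVec_repr B₁ B₂ f, Matrix.mulVec, dotProduct, M,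
      ← structConst_baseChange]
    rfl
  have repr_mul_map : ∀ i j k, B₂.repr (f (B₁ i) * f (B₁ j)) k =
      ∑ p, ∑ q, M p i * M q j * algebraMap K F (structConst b₂ p q k) := by
    intro i j k
    rw [Module.Basis.repr_mul]
    simp only [M, LinearMap.toMatrix_apply, ← structConst_baseChange]
    rfl
  simp only [B₂.ext_elem_iff, repr_map_mul, repr_mul_map, Intertwines]

lemma isIsoAfterBaseChange_iff_hasInvertibleIntertwiner :
    IsIsoAfterBaseChange K A₁ A₂ F ↔
      HasInvertibleIntertwiner (structConst b₁) (structConst b₂) F := by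
  constructor
  · rintro ⟨e, he⟩
    exact ⟨_, e.isUnit_det _ _,
      (map_mul_baseChange_basis_iff_intertwines b₁ b₂ F e.toLinearMap).1 fun i j => he _ _⟩
  · rintro ⟨m, hdet, hm⟩
    let f := Matrix.toLin (b₁.baseChange F) (b₂.baseChange F) m
    have hf : LinearMap.toMatrix (b₁.baseChange F) (b₂.baseChange F) f = m :=
      LinearMap.toMatrix_toLin _ _ m
    refine ⟨LinearEquiv.ofIsUnitDet (f := f) (by rwa [hf]),
      f.map_mul_of_basis (b₁.baseChange F) ?_⟩
    exact (map_mul_baseChange_basis_iff_intertwines b₁ b₂ F f).2 (hf ▸ hm)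

end BaseChange

lemma Algebra.FiniteType.exists_algHom_finiteDimensional_intermediateField (K S Ω : Type*)
    [Field K] [CommRing S] [Nontrivial S] [Algebra K S] [Algebra.FiniteType K S]
    [Field Ω] [Algebra K Ω] [IsAlgClosed Ω] :
    ∃ L : IntermediateField K Ω, FiniteDimensional K L ∧ Nonempty (S →ₐ[K] L) := by
  obtain ⟨M, hM⟩ := Ideal.exists_maximal S
  let := Ideal.Quotient.field M
  have : Algebra.FiniteType K (S ⧸ M) :=
    .of_surjective (Ideal.Quotient.mkₐ K M) (Ideal.Quotient.mkₐ_surjective K M)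
  have : Module.Finite K (S ⧸ M) := finite_of_finite_type_of_isJacobsonRing K (S ⧸ M)
  let ψ : S ⧸ M →ₐ[K] Ω := IsAlgClosed.lift
  exact ⟨ψ.fieldRange, ψ.equivFieldRange.toLinearEquiv.finiteDimensional,
    ⟨ψ.equivFieldRange.toAlgHom.comp (Ideal.Quotient.mkₐ K M)⟩⟩

theorem iso_after_finite_base_change_general (K : Type*) [Field K]
    (A₁ A₂ : Type*) [NonUnitalNonAssocRing A₁] [Module K A₁]
    [SMulCommClass K A₁ A₁] [IsScalarTower K A₁ A₁] [FiniteDimensional K A₁]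
    [NonUnitalNonAssocRing A₂] [Module K A₂]
    [SMulCommClass K A₂ A₂] [IsScalarTower K A₂ A₂] [FiniteDimensional K A₂]
    (K' : Type*) [Field K'] [Algebra K K']
    (hiso : IsIsoAfterBaseChange K A₁ A₂ K') :
    ∃ K'' : IntermediateField K (AlgebraicClosure K),
      FiniteDimensional K K'' ∧ IsIsoAfterBaseChange K A₁ A₂ K'' := by
  have hrank : Module.finrank K A₂ = Module.finrank K A₁ := by
    obtain ⟨e, -⟩ := hiso
    simpa only [Module.finrank_baseChange] using e.finrank_eq.symm
  let b₁ := Module.finBasis K A₁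
  let b₂ := Module.finBasisOfFinrankEq K A₂ hrank
  obtain ⟨S, hSfg, hS⟩ :=
    ((isIsoAfterBaseChange_iff_hasInvertibleIntertwiner b₁ b₂ K').1 hiso).exists_fg_subalgebra
  have := (Subalgebra.fg_iff_finiteType S).1 hSfg
  obtain ⟨L, hL, ⟨φ⟩⟩ :=
    Algebra.FiniteType.exists_algHom_finiteDimensional_intermediateField K S (AlgebraicClosure K)
  exact ⟨L, hL, (isIsoAfterBaseChange_iff_hasInvertibleIntertwiner b₁ b₂ L).2 (hS.map φ)⟩

/-- Let `K` be a field of characteristic zero and `A₁`, `A₂` finite-dimensional (not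
necessarily associative or unital) `K`-algebras.  If `A₁ ⊗_K K' ≅ A₂ ⊗_K K'` as
`K'`-algebras for some field extension `K'` of `K`, then there is a finite field extension
`K''` of `K` with `A₁ ⊗_K K'' ≅ A₂ ⊗_K K''` as `K''`-algebras. -/
theorem iso_after_finite_base_change (K : Type*) [Field K] [CharZero K]
    (A₁ A₂ : Type*) [NonUnitalNonAssocRing A₁] [Module K A₁]
    [SMulCommClass K A₁ A₁] [IsScalarTower K A₁ A₁] [FiniteDimensional K A₁]
    [NonUnitalNonAssocRing A₂] [Module K A₂]
    [SMulCommClass K A₂ A₂] [IsScalarTower K A₂ A₂] [FiniteDimensional K A₂]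
    (K' : Type*) [Field K'] [Algebra K K']
    (hiso : IsIsoAfterBaseChange K A₁ A₂ K') :
    ∃ K'' : IntermediateField K (AlgebraicClosure K),
      FiniteDimensional K K'' ∧ IsIsoAfterBaseChange K A₁ A₂ K'' :=
  iso_after_finite_base_change_general K A₁ A₂ K' hiso
end
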